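/- On R³, for any real parameters b₁,…,b₆, the symmetric tensor field K with matrix [[b₁, −b₆x₂, −b₄x₃], [−b₆x₂, b₅x₃² + 2b₆x₁ + b₂, −b₅x₂x₃], [−b₄x₃, −b₅x₂x₃, b₅x₂² + 2b₄x₁ + b₃]] is a Killing tensor field of the flat Euclidean metric on R³, i.e. ∂_k K_{ij} + ∂_i K_{jk} + ∂_j K_{ki} = 0 for all i,j,k. -/

import Mathlib

open scoped BigOperators

/-- Partial derivative of a function on ℝⁿ in the `i`-th coordinate direction. -/
noncomputable def pd {n : ℕ} (i : Fin n) (f : (Fin n → ℝ) → ℝ) : (Fin n → ℝ) → ℝ :=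
  fun x => fderiv ℝ f x (Pi.single i 1)

/-- Nijenhuis tensor of a (1,1)-tensor field `A` on flat ℝⁿ. -/
noncomputable def nijenhuis {n : ℕ} (A : Fin n → Fin n → (Fin n → ℝ) → ℝ)
    (i j k : Fin n) (x : Fin n → ℝ) : ℝ :=
  ∑ a, (pd a (A i k) x * A a j x - pd a (A i j) x * A a k x
    + (pd k (A a j) x - pd j (A a k) x) * A i a x)

/-- Haantjes tensor of a (1,1)-tensor field `A` on flat ℝⁿ. -/
noncomputable def haantjes {n : ℕ} (A : Fin n → Fin n → (Fin n → ℝ) → ℝ)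
    (i j k : Fin n) (x : Fin n → ℝ) : ℝ :=
  ∑ a, ∑ b, (nijenhuis A b j k x * A i a x * A a b x
    + nijenhuis A i a b x * A a j x * A b k x
    - A i a x * (nijenhuis A a b k x * A b j x + nijenhuis A a j b x * A b k x))

/-- The family of symmetric tensor fields compatible with the
Smorodinski–Winternitz II potential V_IV. -/
noncomputable def KIV (b₁ b₂ b₃ b₄ b₅ b₆ : ℝ) (x : Fin 3 → ℝ) :
    Matrix (Fin 3) (Fin 3) ℝ :=
  !![b₁, -(b₆ * x 1), -(b₄ * x 2);
     -(b₆ * x 1), b₅ * (x 2)^2 + 2*b₆*x 0 + b₂, -(b₅ * x 1 * x 2);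
     -(b₄ * x 2), -(b₅ * x 1 * x 2), b₅ * (x 1)^2 + 2*b₄*x 0 + b₃]

section PartialDerivative

variable {n : ℕ} (i : Fin n) {f g : (Fin n → ℝ) → ℝ} {x : Fin n → ℝ}

@[simp]
lemma pd_const (c : ℝ) : pd i (fun _ => c) x = 0 := by
  simp [pd]

@[simp]
lemma pd_apply (j : Fin n) : pd i (fun y => y j) x = if j = i then 1 else 0 := by
  simp [pd, fderiv_apply, Pi.single_apply]

lemma pd_add (hf : DifferentiableAt ℝ f x) (hg : DifferentiableAt ℝ g x) :
    pd i (fun y => f y + g y) x = pd i f x + pd i g x := by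
  simp [pd, fderiv_fun_add hf hg]

@[simp]
lemma pd_neg : pd i (fun y => -f y) x = -pd i f x := by
  simp [pd, fderiv_fun_neg]

lemma pd_mul (hf : DifferentiableAt ℝ f x) (hg : DifferentiableAt ℝ g x) :
    pd i (fun y => f y * g y) x = f x * pd i g x + g x * pd i f x := by
  simp [pd, fderiv_fun_mul hf hg]

end PartialDerivative

/-- Every member of this family is a Killing tensor field of the
flat Euclidean metric on ℝ³. -/
theorem stmt18 (b₁ b₂ b₃ b₄ b₅ b₆ : ℝ) :
    ∀ i j k : Fin 3, ∀ x : Fin 3 → ℝ,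
      pd k (fun y => KIV b₁ b₂ b₃ b₄ b₅ b₆ y i j) x
      + pd i (fun y => KIV b₁ b₂ b₃ b₄ b₅ b₆ y j k) x
      + pd j (fun y => KIV b₁ b₂ b₃ b₄ b₅ b₆ y k i) x = 0 := by
  intro i j k x
  fin_cases i <;> fin_cases j <;> fin_cases k <;>
    simp (disch := fun_prop) [KIV, sq, pd_add, pd_mul] <;> ring
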